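/- arXiv:2504.16618 — 3 statements merged into one kernel-verified Lean document; each statement's English description precedes it below -/
import Mathlib

section
/- For every natural number n ≥ 1, ∑_{k=1}^{n+1} (-1)^{k-1} ([k-1] + [k]) ( [2n choose n-k+1]_q + [2n choose n-k]_q ) = 0 in ℚ(q), where by convention [2n choose j]_q = 0 whenever j < 0. -/
/-!
Multiply the sum by `[n] ≠ 0`. The product formulas `[a][b] - [a+1][b-1] = [a-b+1]` and
`[a+1][b+1] - [a][b] = [a+b+1]`, together with `[j] [m choose j] = [m+1-j] [m choose j-1]`, turn
the `k`-th term into `([n] + [n+1]) (g (k-1) - g k)` with `g i = (-1)^i [i] [2n choose n-i]`.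
The sum telescopes to `([n] + [n+1]) (g 0 - g (n+1))`, and both ends vanish.
-/

noncomputable def q : RatFunc ℚ := RatFunc.X

noncomputable def qint (k : ℤ) : RatFunc ℚ := (q ^ k - q ^ (-k)) / (q - q⁻¹)

noncomputable def qfact (m : ℕ) : RatFunc ℚ := ∏ i ∈ Finset.range m, qint (i + 1)

noncomputable def qbinom (m : ℕ) (k : ℤ) : RatFunc ℚ :=
  if 0 ≤ k ∧ k ≤ (m : ℤ) then qfact m / (qfact k.toNat * qfact (m - k.toNat)) else 0

lemma q_ne_zero : q ≠ 0 := RatFunc.X_ne_zero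

lemma q_pow_ne_one {m : ℕ} (hm : m ≠ 0) : q ^ m ≠ 1 := by
  intro h
  have hX : (Polynomial.X ^ m : Polynomial ℚ) = 1 := by
    apply RatFunc.algebraMap_injective ℚ
    rwa [map_pow, map_one, RatFunc.algebraMap_X]
  simpa [hm] using congrArg Polynomial.natDegree hX

lemma q_zpow_sub_zpow_neg_ne_zero {k : ℕ} (hk : k ≠ 0) : q ^ (k : ℤ) - q ^ (-k : ℤ) ≠ 0 := by
  rw [sub_ne_zero, zpow_neg, zpow_natCast]
  intro h
  apply q_pow_ne_one (m := 2 * k) (by omega)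
  rw [two_mul, pow_add]
  nth_rewrite 2 [h]
  exact mul_inv_cancel₀ (pow_ne_zero k q_ne_zero)

lemma q_sub_q_inv_ne_zero : q - q⁻¹ ≠ 0 := by
  simpa using q_zpow_sub_zpow_neg_ne_zero one_ne_zero

lemma qint_natCast_ne_zero {k : ℕ} (hk : k ≠ 0) : qint k ≠ 0 :=
  div_ne_zero (q_zpow_sub_zpow_neg_ne_zero hk) q_sub_q_inv_ne_zero

lemma qint_zero : qint 0 = 0 := by simp [qint]

lemma qint_mul_sub_succ_mul_pred (a b : ℤ) :
    qint a * qint b - qint (a + 1) * qint (b - 1) = qint (a - b + 1) := by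
  have := q_ne_zero
  unfold qint
  rw [div_mul_div_comm, div_mul_div_comm, div_sub_div_same,
    div_eq_div_iff (mul_ne_zero q_sub_q_inv_ne_zero q_sub_q_inv_ne_zero) q_sub_q_inv_ne_zero]
  simp only [zpow_neg, zpow_add₀ q_ne_zero, zpow_sub₀ q_ne_zero, zpow_one]
  field_simp
  ring

lemma qint_succ_mul_succ_sub_mul (a b : ℤ) :
    qint (a + 1) * qint (b + 1) - qint a * qint b = qint (a + b + 1) := by
  have := q_ne_zero
  unfold qint
  rw [div_mul_div_comm, div_mul_div_comm, div_sub_div_same,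
    div_eq_div_iff (mul_ne_zero q_sub_q_inv_ne_zero q_sub_q_inv_ne_zero) q_sub_q_inv_ne_zero]
  simp only [zpow_neg, zpow_add₀ q_ne_zero, zpow_one]
  field_simp
  ring

lemma qfact_succ (m : ℕ) : qfact (m + 1) = qfact m * qint (m + 1) :=
  Finset.prod_range_succ _ m

lemma qfact_ne_zero (m : ℕ) : qfact m ≠ 0 :=
  Finset.prod_ne_zero_iff.mpr fun i _ => by exact_mod_cast qint_natCast_ne_zero i.succ_ne_zero

lemma qbinom_of_neg {m : ℕ} {j : ℤ} (h : j < 0) : qbinom m j = 0 :=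
  if_neg fun h' => by omega

lemma qbinom_of_lt {m : ℕ} {j : ℤ} (h : m < j) : qbinom m j = 0 :=
  if_neg fun h' => by omega

lemma qbinom_natCast {m j : ℕ} (h : j ≤ m) : qbinom m j = qfact m / (qfact j * qfact (m - j)) := by
  rw [qbinom, if_pos ⟨j.cast_nonneg, by exact_mod_cast h⟩, Int.toNat_natCast]

lemma qint_mul_qbinom (m : ℕ) (j : ℤ) :
    qint j * qbinom m j = qint (m + 1 - j) * qbinom m (j - 1) := by
  rcases lt_trichotomy j 0 with hj | rfl | hj
  · rw [qbinom_of_neg hj, qbinom_of_neg (by omega), mul_zero, mul_zero]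
  · rw [qint_zero, qbinom_of_neg (j := 0 - 1) (by norm_num), zero_mul, mul_zero]
  rcases lt_trichotomy j (m + 1) with hjm | rfl | hjm
  · obtain ⟨i, rfl⟩ : ∃ i : ℕ, j = i + 1 := ⟨(j - 1).toNat, by omega⟩
    obtain ⟨r, rfl⟩ : ∃ r : ℕ, m = i + 1 + r := ⟨m - (i + 1), by omega⟩
    rw [add_sub_cancel_right, ← Nat.cast_succ, qbinom_natCast (by omega),
      qbinom_natCast (by omega), Nat.add_sub_cancel_left, show i + 1 + r - i = r + 1 by omega,
      qfact_succ, qfact_succ r]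
    have := qfact_ne_zero i
    have := qfact_ne_zero r
    have := qint_natCast_ne_zero i.succ_ne_zero
    have := qint_natCast_ne_zero r.succ_ne_zero
    push_cast at *
    rw [show (i : ℤ) + 1 + r + 1 - (i + 1) = r + 1 by ring]
    field_simp
  · rw [qbinom_of_lt (by omega), sub_self, qint_zero, mul_zero, zero_mul]
  · rw [qbinom_of_lt (j := j) (by omega), qbinom_of_lt (j := j - 1) (by omega), mul_zero, mul_zero]

lemma qint_mul_qint_add_mul_qbinom_add (n : ℕ) (k : ℤ) :
    qint n * ((qint (k - 1) + qint k) * (qbinom (2 * n) (n - k + 1) + qbinom (2 * n) (n - k)))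
      = (qint n + qint (n + 1)) *
        (qint (k - 1) * qbinom (2 * n) (n - k + 1) + qint k * qbinom (2 * n) (n - k)) := by
  have hratio := qint_mul_qbinom (2 * n) (n - k + 1)
  rw [show ((2 * n : ℕ) : ℤ) + 1 - (n - k + 1) = n + k by push_cast; ring, add_sub_cancel_right]
    at hratio
  have h1 := qint_mul_sub_succ_mul_pred n k
  have h2 := qint_succ_mul_succ_sub_mul n (k - 1)
  rw [sub_add_cancel, show (n : ℤ) + (k - 1) + 1 = n + k by ring] at h2
  linear_combination hratio + qbinom (2 * n) (n - k + 1) * h1 - qbinom (2 * n) (n - k) * h2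

lemma sum_Icc_one_eq_sum_range {M : Type*} [AddCommMonoid M] (f : ℕ → M) (n : ℕ) :
    ∑ k ∈ Finset.Icc 1 n, f k = ∑ k ∈ Finset.range n, f (k + 1) := by
  rw [Finset.range_eq_Ico, Finset.sum_Ico_add', ← Finset.Ico_add_one_right_eq_Icc]

/-- `∑_{k=1}^{n+1} (-1)^{k-1}([k-1]+[k])([2n choose n-k+1]_q + [2n choose n-k]_q) = 0`,
where quantum binomial coefficients with negative lower index vanish. -/
theorem qbinom_eigenvalue_sum (n : ℕ) (hn : 1 ≤ n) :
    ∑ k ∈ Finset.Icc 1 (n + 1),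
        (-1 : RatFunc ℚ) ^ (k - 1) * (qint ((k : ℤ) - 1) + qint (k : ℤ)) *
          (qbinom (2 * n) ((n : ℤ) - (k : ℤ) + 1) + qbinom (2 * n) ((n : ℤ) - (k : ℤ))) = 0 := by
  let g : ℕ → RatFunc ℚ := fun i => (-1) ^ i * qint i * qbinom (2 * n) (n - i)
  have hterm (k : ℕ) :
      qint n * ((-1 : RatFunc ℚ) ^ (k + 1 - 1) * (qint ((k + 1 : ℕ) - 1) + qint (k + 1 : ℕ)) *
        (qbinom (2 * n) (n - (k + 1 : ℕ) + 1) + qbinom (2 * n) (n - (k + 1 : ℕ))))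
      = (qint n + qint (n + 1)) * (g k - g (k + 1)) := by
    have := qint_mul_qint_add_mul_qbinom_add n (k + 1)
    simp only [g, Nat.add_sub_cancel, pow_succ, Nat.cast_add, Nat.cast_one] at this ⊢
    rw [add_sub_cancel_right, show (n : ℤ) - (k + 1) + 1 = n - k by ring] at this ⊢
    linear_combination (-1 : RatFunc ℚ) ^ k * this
  rw [← mul_right_inj' (qint_natCast_ne_zero (k := n) (by omega)), mul_zero, Finset.mul_sum,
    sum_Icc_one_eq_sum_range]
  simp only [hterm, ← Finset.mul_sum, Finset.sum_range_sub', g]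
  rw [Nat.cast_zero, qint_zero, qbinom_of_neg (m := 2 * n) (j := n - (n + 1 : ℕ)) (by omega)]
  ring
end

section
/- Fix natural numbers n and N with N ∈ {2n, 2n+1}, and rational numbers ρ_i for 1 ≤ i ≤ n defined by ρ_i = i - 1 if N = 2n and ρ_i = i - 1/2 if N = 2n+1. For subsets I, J of {1,…,n} define Φ(I, J) = 0 if J ≠ I^∁, and Φ(I, I^∁) = (-1)^{n(N+1)|I|} ∏_{i∈I} (-1)^i q^{-ρ_i} in ℚ(q^{1/2}). For 1 ≤ i ≤ n define the creation operator on subsets: Ψ_i^†(I) = 0 if i ∈ I, and otherwise contributes the scalar (-1)^{|{j∈I : j>i}|} times the subset I ∪ {i}. Then for all I, J ⊆ {1,…,n} and all 1 ≤ i ≤ n with i ∉ I and i ∉ J, the following identity of scalars holds: (-1)^{|{j∈I : j>i}|} Φ(I ∪ {i}, J) = (-1)^{Nn} q^{-ρ_i} (-1)^{|{j∈J : j>i}|} Φ(I, J ∪ {i}). -/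
/-!
Both sides vanish unless `J` is the complement of `I ∪ {i}`, equivalently `J ∪ {i}` is the
complement of `I`. In that case the product defining `Φ(I ∪ {i}, J)` is the one defining
`Φ(I, I^∁)` times the factor `(-1)^i q^{-ρ_i}`, so only signs remain to compare. They agree
because the elements of `{1,…,n}` above `i` are split between `I` and `J`: the two counts add up
to `n - i`.
-/

/-- `tq` represents `q^{1/2}`, the generator of `ℚ(q^{1/2})`; thus `q = tq ^ 2`. -/
noncomputable def tq : RatFunc ℚ := RatFunc.X

/-- Twice the quantity `ρ_i`: `2ρ_i = 2i - 2` in type `D` (`N = 2n`) and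
`2ρ_i = 2i - 1` in type `B` (`N = 2n + 1`), so that `q^{ρ_i} = tq ^ (rho2 n N i)`. -/
def rho2 (n N : ℕ) (i : ℕ) : ℤ := if N = 2 * n then 2 * (i : ℤ) - 2 else 2 * (i : ℤ) - 1

/-- The bilinear form on the spin module, in the basis indexed by subsets of `{1,…,n}`:
`Φ(I, J) = 0` unless `J = I^∁`, and `Φ(I, I^∁) = (-1)^{n(N+1)|I|} ∏_{i∈I} (-1)^i q^{-ρ_i}`. -/
noncomputable def PhiS (n N : ℕ) (I J : Finset ℕ) : RatFunc ℚ :=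
  if J = Finset.Icc 1 n \ I then
    (-1 : RatFunc ℚ) ^ (n * (N + 1) * I.card) *
      ∏ i ∈ I, ((-1 : RatFunc ℚ) ^ i * tq ^ (-(rho2 n N i)))
  else 0

open Finset

lemma insert_eq_sdiff_iff_eq_sdiff_insert {α : Type*} [DecidableEq α] {U I J : Finset α} {i : α}
    (hiU : i ∈ U) (hiI : i ∉ I) (hiJ : i ∉ J) :
    insert i J = U \ I ↔ J = U \ insert i I := by
  rw [sdiff_insert]
  constructor
  · intro h
    rw [← h, erase_insert hiJ]
  · rintro rfl
    exact insert_erase (mem_sdiff.2 ⟨hiU, hiI⟩)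

lemma card_filter_add_card_filter_sdiff {α : Type*} [DecidableEq α] {s U : Finset α}
    (p : α → Prop) [DecidablePred p] (hsU : s ⊆ U) :
    #(s.filter p) + #((U \ s).filter p) = #(U.filter p) := by
  have hsdiff : (U \ s).filter p = U.filter p \ s.filter p := by
    ext; simp only [mem_filter, mem_sdiff]; tauto
  rw [hsdiff, add_comm]
  exact card_sdiff_add_card_eq_card (filter_subset_filter p hsU)

lemma card_filter_gt_add_card_filter_gt_compl {n i : ℕ} {I : Finset ℕ} (hi : i ∈ Icc 1 n)
    (hI : I ⊆ Icc 1 n) :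
    #(I.filter (i < ·)) + #((Icc 1 n \ insert i I).filter (i < ·)) = n - i := by
  have hinsert : (insert i I).filter (i < ·) = I.filter (i < ·) := by
    rw [filter_insert, if_neg (lt_irrefl i)]
  have hIoc : (Icc 1 n).filter (i < ·) = Ioc i n := by
    ext; simp only [mem_filter, mem_Icc, mem_Ioc]; omega
  rw [← hinsert, card_filter_add_card_filter_sdiff _ (insert_subset_iff.2 ⟨hi, hI⟩), hIoc,
    Nat.card_Ioc]

lemma PhiS_insert_compl (n N : ℕ) {I : Finset ℕ} {i : ℕ} (hiI : i ∉ I) :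
    PhiS n N (insert i I) (Icc 1 n \ insert i I) =
      (-1 : RatFunc ℚ) ^ (n * (N + 1) + i) * tq ^ (-(rho2 n N i)) *
        PhiS n N I (Icc 1 n \ I) := by
  rw [PhiS, if_pos rfl, PhiS, if_pos rfl, prod_insert hiI, card_insert_of_notMem hiI]
  ring

lemma neg_one_pow_spin_sign {R : Type*} [Monoid R] [HasDistribNeg R] {a b i n : ℕ}
    (h : a + b + i = n) (N : ℕ) :
    (-1 : R) ^ (a + n * (N + 1) + i) = (-1) ^ (N * n + b) := by
  apply neg_one_pow_congr
  have : a + n * (N + 1) + i + 2 * b = N * n + b + 2 * n := by subst h; ring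
  simp only [Nat.even_iff]
  omega

theorem spin_form_creation_invariance_general (n N : ℕ)
    (I J : Finset ℕ) (hI : I ⊆ Finset.Icc 1 n)
    (i : ℕ) (hi1 : 1 ≤ i) (hi2 : i ≤ n) (hiI : i ∉ I) (hiJ : i ∉ J) :
    (-1 : RatFunc ℚ) ^ (I.filter (fun j => i < j)).card * PhiS n N (insert i I) J =
      (-1 : RatFunc ℚ) ^ (N * n) * tq ^ (-(rho2 n N i)) *
        ((-1 : RatFunc ℚ) ^ (J.filter (fun j => i < j)).card * PhiS n N I (insert i J)) := by
  have hi : i ∈ Icc 1 n := mem_Icc.2 ⟨hi1, hi2⟩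
  have hcompl := insert_eq_sdiff_iff_eq_sdiff_insert hi hiI hiJ
  by_cases hJ : J = Icc 1 n \ insert i I
  · have hcount := card_filter_gt_add_card_filter_gt_compl hi hI
    rw [hcompl.2 hJ, hJ, PhiS_insert_compl n N hiI]
    have hsign := neg_one_pow_spin_sign (R := RatFunc ℚ)
      (show _ + _ + i = n by rw [hcount]; omega) N
    rw [pow_add, pow_add] at hsign
    linear_combination tq ^ (-(rho2 n N i)) * PhiS n N I (Icc 1 n \ I) * hsign
  · rw [PhiS, if_neg hJ, PhiS, if_neg (mt hcompl.1 hJ)]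
    ring

/-- Invariance of the spin form under the Clifford creation operators: for `i ∉ I`, `i ∉ J`,
`(-1)^{|{j∈I : j>i}|} Φ(I ∪ {i}, J) = (-1)^{Nn} q^{-ρ_i} (-1)^{|{j∈J : j>i}|} Φ(I, J ∪ {i})`. -/
theorem spin_form_creation_invariance (n N : ℕ) (hN : N = 2 * n ∨ N = 2 * n + 1)
    (I J : Finset ℕ) (hI : I ⊆ Finset.Icc 1 n) (hJ : J ⊆ Finset.Icc 1 n)
    (i : ℕ) (hi1 : 1 ≤ i) (hi2 : i ≤ n) (hiI : i ∉ I) (hiJ : i ∉ J) :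
    (-1 : RatFunc ℚ) ^ (I.filter (fun j => i < j)).card * PhiS n N (insert i I) J =
      (-1 : RatFunc ℚ) ^ (N * n) * tq ^ (-(rho2 n N i)) *
        ((-1 : RatFunc ℚ) ^ (J.filter (fun j => i < j)).card * PhiS n N I (insert i J)) :=
  spin_form_creation_invariance_general n N I J hI i hi1 hi2 hiI hiJ
end

section
/- With the operators ψ_i, ψ_i^† on the free module M with basis {x_I : I ⊆ {1,…,n}} defined by ψ_i^† x_I = 0 if i ∈ I, ψ_i^† x_I = q^{-ρ_i}(-q)^{|{j∈I:j>i}|} x_{I∪{i}} if i ∉ I, and ψ_i x_I = q^{ρ_i}(-q)^{|{j∈I:j>i}|} x_{I∖{i}} if i ∈ I, ψ_i x_I = 0 otherwise, one has for every 1 ≤ i ≤ n the operator identity ψ_i ψ_i^† + ψ_i^† ψ_i = (q² - 1) ∑_{j>i} ψ_j^† ψ_j + 1 (as linear operators on M). -/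
/-- The ground field `ℚ(q^{1/2})`. -/
noncomputable abbrev KS : Type := RatFunc ℚ

/-- `qh` represents `q^{1/2}`, the generator of `ℚ(q^{1/2})`. -/
noncomputable def qh : KS := RatFunc.X

/-- The quantum parameter `q = (q^{1/2})²`. -/
noncomputable def qq : KS := qh ^ 2

/-- The quantum Clifford annihilation operator `ψ_i` on the free module with basis
`{x_I : I ⊆ {1,…,n}}`: `ψ_i x_I = c_i (-q)^{|{j∈I : j>i}|} x_{I∖{i}}` if `i ∈ I`, else `0`.
Here the unit `c i` plays the role of the scalar `q^{ρ_i}` (whose exponent `ρ_i`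
is a fixed rational number). -/
noncomputable def psiOp (n : ℕ) (c : Fin n → KSˣ) (i : Fin n) :
    (Finset (Fin n) →₀ KS) →ₗ[KS] (Finset (Fin n) →₀ KS) :=
  Finsupp.lift (Finset (Fin n) →₀ KS) KS (Finset (Fin n)) fun I =>
    if i ∈ I then
      ((c i : KS) * (-qq) ^ (I.filter (fun j => i < j)).card) •
        Finsupp.single (I.erase i) (1 : KS)
    else 0

/-- The quantum Clifford creation operator `ψ_i^†`:
`ψ_i^† x_I = c_i⁻¹ (-q)^{|{j∈I : j>i}|} x_{I∪{i}}` if `i ∉ I`, else `0`, where the unit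
`c i` plays the role of `q^{ρ_i}` (so `c i⁻¹` is `q^{-ρ_i}`). -/
noncomputable def psiDagOp (n : ℕ) (c : Fin n → KSˣ) (i : Fin n) :
    (Finset (Fin n) →₀ KS) →ₗ[KS] (Finset (Fin n) →₀ KS) :=
  Finsupp.lift (Finset (Fin n) →₀ KS) KS (Finset (Fin n)) fun I =>
    if i ∈ I then 0
    else
      (((c i : KS))⁻¹ * (-qq) ^ (I.filter (fun j => i < j)).card) •
        Finsupp.single (insert i I) (1 : KS)

/-! On a basis vector `x_I` with `m = #{k ∈ I | i < k}`, the scalars `c_i^{±1} (-q)^m` picked up by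
`ψ_i` and `ψ_i^†` multiply to `q^{2m}`, so `ψ_i ψ_i^† + ψ_i^† ψ_i` (only one term survives, according
as `i ∉ I` or `i ∈ I`) acts as `q^{2m}`, and each `ψ_j^† ψ_j` with `j ∈ I` acts as
`q^{2 #{k ∈ I | j < k}}`. Over the `m` indices `j ∈ I` with `j > i` these exponents run through
`0, …, m - 1`, and `(q² - 1)(1 + q² + ⋯ + q^{2(m-1)}) + 1 = q^{2m}`. -/

open Finset

theorem sub_one_mul_sum_pow_card_filter_lt_add_one {α R : Type*} [LinearOrder α] [CommRing R]
    (x : R) (S : Finset α) :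
    (x - 1) * ∑ j ∈ S, x ^ #{k ∈ S | j < k} + 1 = x ^ #S := by
  induction S using Finset.induction_on_max with
  | empty => simp
  | insert a S ha ih =>
    have haS : a ∉ S := fun h => lt_irrefl a (ha a h)
    have hsum : ∑ j ∈ insert a S, x ^ #{k ∈ insert a S | j < k} =
        1 + x * ∑ j ∈ S, x ^ #{k ∈ S | j < k} := by
      rw [sum_insert haS, mul_sum]
      congr 1
      · rw [filter_insert, if_neg (lt_irrefl a), filter_false_of_mem fun k hk => lt_asymm (ha k hk),
          card_empty, pow_zero]
      · refine sum_congr rfl fun j hj => ?_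
        rw [filter_insert, if_pos (ha j hj), card_insert_of_notMem (by simp [haS]), pow_succ']
    rw [hsum, card_insert_of_notMem haS, pow_succ', ← ih]
    ring

lemma inv_mul_neg_pow_mul_mul_neg_pow {K : Type*} [Field K] {a : K} (ha : a ≠ 0) (q : K)
    (m : ℕ) : a⁻¹ * (-q) ^ m * (a * (-q) ^ m) = (q ^ 2) ^ m := by
  rw [mul_mul_mul_comm, inv_mul_cancel₀ ha, one_mul, ← mul_pow, neg_mul_neg, sq]

lemma card_filter_lt_erase_self {α : Type*} [LinearOrder α] (i : α) (I : Finset α) :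
    #{k ∈ I.erase i | i < k} = #{k ∈ I | i < k} := by
  rw [filter_erase, erase_eq_of_notMem (by simp)]

lemma card_filter_lt_insert_self {α : Type*} [LinearOrder α] (i : α) (I : Finset α) :
    #{k ∈ insert i I | i < k} = #{k ∈ I | i < k} := by
  rw [filter_insert, if_neg (lt_irrefl i)]

section Basis

variable {n : ℕ} (c : Fin n → KSˣ)

lemma psiOp_single (i : Fin n) (I : Finset (Fin n)) :
    psiOp n c i (Finsupp.single I 1) =
      if i ∈ I then ((c i : KS) * (-qq) ^ #{k ∈ I | i < k}) • Finsupp.single (I.erase i) 1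
      else 0 := by
  simp [psiOp]

lemma psiDagOp_single (i : Fin n) (I : Finset (Fin n)) :
    psiDagOp n c i (Finsupp.single I 1) =
      if i ∈ I then 0
      else ((c i : KS)⁻¹ * (-qq) ^ #{k ∈ I | i < k}) • Finsupp.single (insert i I) 1 := by
  simp [psiDagOp]

lemma psiDagOp_comp_psiOp_single (i : Fin n) (I : Finset (Fin n)) :
    (psiDagOp n c i ∘ₗ psiOp n c i) (Finsupp.single I 1) =
      if i ∈ I then (qq ^ 2) ^ #{k ∈ I | i < k} • Finsupp.single I 1 else 0 := by
  by_cases hi : i ∈ I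
  · simp only [LinearMap.comp_apply, psiOp_single, psiDagOp_single, hi, if_true, map_smul,
      notMem_erase, if_false, smul_smul, card_filter_lt_erase_self, insert_erase hi]
    rw [mul_comm, inv_mul_neg_pow_mul_mul_neg_pow (c i).ne_zero]
  · simp [psiOp_single, hi]

lemma psiOp_comp_psiDagOp_single (i : Fin n) (I : Finset (Fin n)) :
    (psiOp n c i ∘ₗ psiDagOp n c i) (Finsupp.single I 1) =
      if i ∈ I then 0 else (qq ^ 2) ^ #{k ∈ I | i < k} • Finsupp.single I 1 := by
  by_cases hi : i ∈ I
  · simp [psiDagOp_single, hi]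
  · simp only [LinearMap.comp_apply, psiOp_single, psiDagOp_single, hi, if_false, map_smul,
      mem_insert_self, if_true, smul_smul, card_filter_lt_insert_self, erase_insert hi]
    rw [inv_mul_neg_pow_mul_mul_neg_pow (c i).ne_zero]

lemma anticommutator_single (i : Fin n) (I : Finset (Fin n)) :
    (psiOp n c i ∘ₗ psiDagOp n c i + psiDagOp n c i ∘ₗ psiOp n c i) (Finsupp.single I 1) =
      (qq ^ 2) ^ #{k ∈ I | i < k} • Finsupp.single I 1 := by
  rw [LinearMap.add_apply, psiOp_comp_psiDagOp_single, psiDagOp_comp_psiOp_single]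
  split_ifs <;> simp

lemma sum_Ioi_psiDagOp_comp_psiOp_single (i : Fin n) (I : Finset (Fin n)) :
    ∑ j ∈ Ioi i, (psiDagOp n c j ∘ₗ psiOp n c j) (Finsupp.single I 1) =
      (∑ j ∈ {k ∈ I | i < k}, (qq ^ 2) ^ #{k ∈ {k ∈ I | i < k} | j < k}) •
        Finsupp.single I 1 := by
  have hS : {k ∈ I | i < k} = {j ∈ Ioi i | j ∈ I} := by ext; simp [and_comm]
  have hfilter : ∀ j, i < j → {k ∈ I | j < k} = {k ∈ {k ∈ I | i < k} | j < k} := fun j hij => by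
    rw [filter_filter]
    exact filter_congr fun k _ => (and_iff_right_of_imp hij.trans).symm
  simp only [psiDagOp_comp_psiOp_single]
  rw [← sum_filter, sum_smul, ← hS]
  exact sum_congr rfl fun j hj => by rw [hfilter j (mem_filter.1 hj).2]

end Basis

/-- The quantum Clifford anticommutation relation:
`ψ_i ψ_i^† + ψ_i^† ψ_i = (q² - 1) ∑_{j>i} ψ_j^† ψ_j + 1` as operators on the spin module. -/
theorem quantum_clifford_anticommutator (n : ℕ) (c : Fin n → KSˣ) (i : Fin n) :
    psiOp n c i ∘ₗ psiDagOp n c i + psiDagOp n c i ∘ₗ psiOp n c i =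
      (qq ^ 2 - 1) • (∑ j ∈ Finset.Ioi i, psiDagOp n c j ∘ₗ psiOp n c j) + LinearMap.id := by
  refine Finsupp.lhom_ext' fun I => LinearMap.ext_ring ?_
  rw [LinearMap.comp_apply, LinearMap.comp_apply, Finsupp.lsingle_apply, anticommutator_single,
    LinearMap.add_apply, LinearMap.smul_apply, LinearMap.sum_apply,
    sum_Ioi_psiDagOp_comp_psiOp_single, smul_smul, LinearMap.id_apply,
    ← sub_one_mul_sum_pow_card_filter_lt_add_one, add_smul, one_smul]
end
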